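/- Let 0 < T ≤ π/2, π − T < φ_W < π, and T > −tan φ_W (i.e., (φ_W, T) ∈ D₂'''). Then F²_{φ_W,T} has exactly one positive root, and this root is the unique positive solution of the equation −x·tan φ_W = tanh(Tx). -/

import Mathlib

open Real

/-- The determinant function
`F²_{φ_W,T}(a) = -a² sinh(2aT) sin(2φ_W) + 2a (1 - cosh(2aT) cos(2φ_W)) + sinh(2aT) sin(2φ_W)`. -/
noncomputable def F2 (φW T a : ℝ) : ℝ :=
  -a ^ 2 * Real.sinh (2 * a * T) * Real.sin (2 * φW)
    + 2 * a * (1 - Real.cosh (2 * a * T) * Real.cos (2 * φW))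
    + Real.sinh (2 * a * T) * Real.sin (2 * φW)

/-- The hyperbolic cotangent `coth x = cosh x / sinh x` (not available in Mathlib). -/
noncomputable def Real.coth (x : ℝ) : ℝ := Real.cosh x / Real.sinh x

/-!
`F2` factors as `4 (cosh (Tb) sin φ - b sinh (Tb) cos φ) (b cosh (Tb) sin φ + sinh (Tb) cos φ)`.
On `D₂'''` we have `π/2 < φ < π`, so for `b ≥ 0` the first factor is positive and the zeros of the
second are the solutions of `tanh (Tb) = t b` with `t = -tan φ ∈ (0, T)`. Rescaling, these are the
positive zeros of `tanh y - k y` with `k = t / T ∈ (0, 1)`. This function is strictly concave on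
`[0, ∞)` and vanishes at `0`, so it has at most one positive zero; it has one because its slope at
`0` is `1 - k > 0` while it is negative at `1 / k`.
-/

open Set

theorem Real.hasDerivAt_tanh (x : ℝ) : HasDerivAt tanh (cosh x ^ 2)⁻¹ x := by
  have h := (hasDerivAt_sinh x).div (hasDerivAt_cosh x) (cosh_pos x).ne'
  rw [← sq, ← sq, cosh_sq_sub_sinh_sq, one_div] at h
  exact h.congr_of_eventuallyEq (.of_forall fun y => tanh_eq_sinh_div_cosh y)

@[fun_prop]
theorem Real.continuous_tanh : Continuous tanh :=
  continuous_iff_continuousAt.2 fun x => (hasDerivAt_tanh x).continuousAt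

theorem Real.strictConcaveOn_tanh : StrictConcaveOn ℝ (Ici 0) tanh := by
  refine StrictAntiOn.strictConcaveOn_of_deriv (convex_Ici 0) continuous_tanh.continuousOn ?_
  rw [interior_Ici]
  intro x (hx : 0 < x) y (hy : 0 < y) hxy
  simp only [(hasDerivAt_tanh _).deriv]
  gcongr
  exact cosh_lt_cosh.2 (by rwa [abs_of_pos hx, abs_of_pos hy])

theorem StrictConcaveOn.eq_of_map_eq_zero {f : ℝ → ℝ} (hf : StrictConcaveOn ℝ (Ici 0) f)
    (h0 : f 0 = 0) {x y : ℝ} (hx : 0 < x) (hy : 0 < y) (hfx : f x = 0) (hfy : f y = 0) :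
    x = y := by
  wlog hxy : x < y generalizing x y
  · exact (not_lt.1 hxy).lt_or_eq.elim (fun h => (this hy hx hfy hfx h).symm) Eq.symm
  have hx_mem : x ∈ openSegment ℝ 0 y := by rw [openSegment_eq_Ioo hy]; exact ⟨hx, hxy⟩
  have := hf.lt_on_openSegment self_mem_Ici hy.le hy.ne hx_mem
  simp [h0, hfx, hfy] at this

theorem Real.existsUnique_pos_tanh_eq_mul {k : ℝ} (hk0 : 0 < k) (hk1 : k < 1) :
    ∃! y, 0 < y ∧ tanh y = k * y := by
  have hconc : StrictConcaveOn ℝ (Ici 0) fun y => tanh y - k * y :=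
    strictConcaveOn_tanh.sub_convexOn (convexOn_id (convex_Ici 0) |>.smul hk0.le)
  obtain ⟨y₀, hy₀, hy₀k⟩ : ∃ y₀, 0 < y₀ ∧ k * y₀ < tanh y₀ := by
    have h := (hasDerivAt_tanh 0).tendsto_slope_zero_right.eventually (lt_mem_nhds (a := k) ?_)
    · obtain ⟨y, hy, hy0⟩ := (h.and self_mem_nhdsWithin).exists
      refine ⟨y, hy0, ?_⟩
      rw [zero_add, tanh_zero, sub_zero, smul_eq_mul, lt_inv_mul_iff₀' hy0] at hy
      linarith
    · simpa using hk1
  have hy₀lt : y₀ < k⁻¹ := by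
    rw [← mul_one k⁻¹, lt_inv_mul_iff₀ hk0]
    linarith [tanh_lt_one y₀]
  have hneg : tanh k⁻¹ - k * k⁻¹ < 0 := by
    rw [mul_inv_cancel₀ hk0.ne']
    linarith [tanh_lt_one k⁻¹]
  obtain ⟨y, hy, hHy⟩ := intermediate_value_Ioo' (f := fun y => tanh y - k * y) hy₀lt.le
    (by fun_prop) ⟨hneg, sub_pos.2 hy₀k⟩
  refine ⟨y, ⟨hy₀.trans hy.1, by linarith⟩, fun z ⟨hz, hHz⟩ => ?_⟩
  exact hconc.eq_of_map_eq_zero (by simp) hz (hy₀.trans hy.1) (by simp [hHz]) hHy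

theorem Real.existsUnique_pos_tanh_mul_eq_mul {T t : ℝ} (hT : 0 < T) (ht : 0 < t) (htT : t < T) :
    ∃! a, 0 < a ∧ tanh (T * a) = t * a := by
  obtain ⟨y, ⟨hy, hyeq⟩, huniq⟩ :=
    existsUnique_pos_tanh_eq_mul (div_pos ht hT) ((div_lt_one hT).2 htT)
  refine ⟨y / T, ⟨by positivity, ?_⟩, fun a ⟨ha, haeq⟩ => ?_⟩
  · rw [mul_div_cancel₀ y hT.ne', hyeq]
    ring
  · rw [← huniq (T * a) ⟨by positivity, by rw [haeq]; field_simp⟩]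
    field_simp

theorem F2_eq_mul (φ T b : ℝ) :
    F2 φ T b = 4 * (cosh (T * b) * sin φ - b * sinh (T * b) * cos φ)
      * (b * cosh (T * b) * sin φ + sinh (T * b) * cos φ) := by
  rw [F2, show 2 * b * T = 2 * (T * b) by ring, sinh_two_mul, cosh_two_mul, sin_two_mul,
    cos_two_mul]
  linear_combination (-2 * b) * cosh_sq_sub_sinh_sq (T * b)
    - 4 * b * cosh (T * b) ^ 2 * sin_sq_add_cos_sq φ

theorem F2_eq_zero_iff {φ T b : ℝ} (hs : 0 < sin φ) (hc : cos φ < 0) (hT : 0 ≤ T) (hb : 0 ≤ b) :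
    F2 φ T b = 0 ↔ -b * tan φ = tanh (T * b) := by
  have hsinh : 0 ≤ b * sinh (T * b) := mul_nonneg hb (sinh_nonneg_iff.2 (by positivity))
  have hfirst : 0 < cosh (T * b) * sin φ - b * sinh (T * b) * cos φ := by
    nlinarith [mul_pos (cosh_pos (T * b)) hs, mul_nonneg hsinh (neg_nonneg.2 hc.le)]
  rw [F2_eq_mul, mul_eq_zero, or_iff_right (by positivity), tan_eq_sin_div_cos,
    tanh_eq_sinh_div_cosh, neg_mul, mul_div_assoc', ← neg_div,
    div_eq_div_iff hc.ne (cosh_pos _).ne']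
  constructor <;> intro h <;> linarith

theorem F2_one_root_on_D2''' (φW T : ℝ) (hT0 : 0 < T) (hT : T ≤ Real.pi / 2)
    (hφ1 : Real.pi - T < φW) (hφ2 : φW < Real.pi) (htan : -Real.tan φW < T) :
    ∃ a : ℝ, 0 < a ∧ F2 φW T a = 0 ∧
      (∀ b : ℝ, 0 < b → F2 φW T b = 0 → b = a) ∧
      -a * Real.tan φW = Real.tanh (T * a) ∧
      (∀ b : ℝ, 0 < b → -b * Real.tan φW = Real.tanh (T * b) → b = a) := by
  have hs : 0 < sin φW := sin_pos_of_pos_of_lt_pi (by linarith [pi_pos]) hφ2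
  have hc : cos φW < 0 := cos_neg_of_pi_div_two_lt_of_lt (by linarith) (by linarith)
  have htan_neg : tan φW < 0 := by rw [tan_eq_sin_div_cos]; exact div_neg_of_pos_of_neg hs hc
  have hroot_iff (b : ℝ) : -b * tan φW = tanh (T * b) ↔ tanh (T * b) = -tan φW * b := by
    constructor <;> intro h <;> linarith
  obtain ⟨a, ⟨ha, haeq⟩, huniq⟩ :=
    existsUnique_pos_tanh_mul_eq_mul hT0 (neg_pos.2 htan_neg) htan
  have hF2_iff (b : ℝ) (hb : 0 < b) := F2_eq_zero_iff hs hc hT0.le hb.le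
  refine ⟨a, ha, (hF2_iff a ha).2 ((hroot_iff a).2 haeq), fun b hb hF => ?_,
    (hroot_iff a).2 haeq, fun b hb h => huniq b ⟨hb, (hroot_iff b).1 h⟩⟩
  exact huniq b ⟨hb, (hroot_iff b).1 ((hF2_iff b hb).1 hF)⟩
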